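/- Let 1 < a < 2, R ≥ 2, and set g(ρ) = 2(1+ρ)^{−a} and Z_{−1}(ρ) = 2ρ²/(1+ρ²). Define φ(ρ) = Z_{−1}(ρ) ∫_ρ^{4R} (1/(r Z_{−1}(r)²)) (∫₀^r g(s) Z_{−1}(s) s ds) dr for ρ ∈ (0, 4R]. Then φ satisfies ℒ_{−1}[φ] + g = 0 on (0, 4R), φ(4R) = 0, and there is a constant C depending only on a (not on R) such that |φ(ρ)| ≤ C R^{2−a} for all ρ ∈ (0, 4R]. -/

import Mathlib

/-!
Write `φ = Z F` with `Z = Z₋₁`, `F(ρ) = ∫_ρ^{4R} h`, `h = G / (r Z²)` and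
`G(r) = ∫₀^r g Z s ds`. The Leibniz rule for `ℒ₋₁` and `ℒ₋₁[Z] = 0` give
`ℒ₋₁[φ] = -(Z h' + Z h / ρ + 2 Z' h)`, and differentiating `ρ Z² h = G` shows that this is `-g`.

For the bound, `G(r) ≲ min(r⁴, r^{2-a})` and `1 / (r Z²) = (1 + r²)² / (4 r⁵)` give
`h(r) ≲ r⁻³ + r^{1-a}`, hence `0 ≤ F(ρ) ≲ ρ⁻² + R^{2-a}`; the factor `Z(ρ) ≤ min(2, 2ρ²)`
absorbs `ρ⁻²`.
-/

noncomputable section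

open Real Set MeasureTheory

/-- The 1-corrotational harmonic map profile `w(ρ) = π - 2 arctan ρ`. -/
def wfun (ρ : ℝ) : ℝ := Real.pi - 2 * Real.arctan ρ

/-- The mode-`k` operator `ℒ_k[φ](ρ) = φ'' + φ'/ρ − (k² + 2k cos w + cos 2w) φ/ρ²`. -/
def Lmode (k : ℤ) (φ : ℝ → ℝ) (ρ : ℝ) : ℝ :=
  deriv (deriv φ) ρ + deriv φ ρ / ρ
    - ((k : ℝ) ^ 2 + 2 * (k : ℝ) * Real.cos (wfun ρ) + Real.cos (2 * wfun ρ)) * φ ρ / ρ ^ 2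

/-- The kernel element `Z₋₁(ρ) = 2ρ²/(1+ρ²)` of `ℒ₋₁`. -/
def Zneg1 (ρ : ℝ) : ℝ := 2 * ρ ^ 2 / (1 + ρ ^ 2)

/-- The right-hand side `g(ρ) = 2(1+ρ)^{-a}`. -/
def gfun (a ρ : ℝ) : ℝ := 2 * (1 + ρ) ^ (-a)

/-- The variation-of-parameters solution
`φ(ρ) = Z₋₁(ρ) ∫_ρ^{4R} (1/(r Z₋₁(r)²)) (∫₀^r g(s) Z₋₁(s) s ds) dr`. -/
def phiNeg1 (a R ρ : ℝ) : ℝ :=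
  Zneg1 ρ * ∫ r in ρ..(4 * R),
    (1 / (r * Zneg1 r ^ 2)) * ∫ s in (0 : ℝ)..r, gfun a s * Zneg1 s * s

open Filter Topology

lemma continuous_Zneg1 : Continuous Zneg1 :=
  Continuous.div (by fun_prop) (by fun_prop) fun _ => by positivity

lemma Zneg1_nonneg (x : ℝ) : 0 ≤ Zneg1 x := by
  unfold Zneg1; positivity

lemma Zneg1_pos {x : ℝ} (hx : x ≠ 0) : 0 < Zneg1 x := by
  unfold Zneg1; positivity

lemma Zneg1_le_two (x : ℝ) : Zneg1 x ≤ 2 := by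
  rw [Zneg1, div_le_iff₀ (by positivity)]
  linarith

lemma Zneg1_le_two_mul_sq (x : ℝ) : Zneg1 x ≤ 2 * x ^ 2 := by
  rw [Zneg1, div_le_iff₀ (by positivity)]
  nlinarith [sq_nonneg (x ^ 2)]

lemma hasDerivAt_Zneg1 (x : ℝ) : HasDerivAt Zneg1 (4 * x / (1 + x ^ 2) ^ 2) x := by
  have hden : 1 + x ^ 2 ≠ 0 := by positivity
  refine (((hasDerivAt_pow 2 x).const_mul 2).div ((hasDerivAt_pow 2 x).const_add 1)
    hden).congr_deriv ?_
  field_simp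
  ring

lemma hasDerivAt_Zneg1_deriv (x : ℝ) :
    HasDerivAt (fun x : ℝ => 4 * x / (1 + x ^ 2) ^ 2) ((4 - 12 * x ^ 2) / (1 + x ^ 2) ^ 3) x := by
  have hden : 1 + x ^ 2 ≠ 0 := by positivity
  refine (((hasDerivAt_id x).const_mul 4).div (((hasDerivAt_pow 2 x).const_add 1).pow 2)
    (pow_ne_zero 2 hden)).congr_deriv ?_
  simp only [Pi.pow_apply, id]
  field_simp
  ring

lemma cos_wfun (x : ℝ) : Real.cos (wfun x) = (x ^ 2 - 1) / (1 + x ^ 2) := by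
  have hden : 1 + x ^ 2 ≠ 0 := by positivity
  rw [wfun, Real.cos_pi_sub, Real.cos_two_mul, Real.cos_sq_arctan]
  field_simp
  ring

lemma Lmode_eq_of_hasDerivAt {k : ℤ} {φ φ' : ℝ → ℝ} {φ'' ρ : ℝ}
    (hφ : ∀ᶠ x in 𝓝 ρ, HasDerivAt φ (φ' x) x) (hφ' : HasDerivAt φ' φ'' ρ) :
    Lmode k φ ρ = φ'' + φ' ρ / ρ
      - ((k : ℝ) ^ 2 + 2 * (k : ℝ) * Real.cos (wfun ρ) + Real.cos (2 * wfun ρ)) * φ ρ / ρ ^ 2 := by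
  have hderiv : deriv φ =ᶠ[𝓝 ρ] φ' := hφ.mono fun x hx => hx.deriv
  rw [Lmode, hderiv.deriv_eq, hφ'.deriv, hderiv.eq_of_nhds]

lemma Lmode_mul_of_hasDerivAt {k : ℤ} {Z Z' F F' : ℝ → ℝ} {Z'' F'' ρ : ℝ}
    (hZ : ∀ᶠ x in 𝓝 ρ, HasDerivAt Z (Z' x) x) (hZ' : HasDerivAt Z' Z'' ρ)
    (hF : ∀ᶠ x in 𝓝 ρ, HasDerivAt F (F' x) x) (hF' : HasDerivAt F' F'' ρ) :
    Lmode k (Z * F) ρ = F ρ * Lmode k Z ρ + Z ρ * (F'' + F' ρ / ρ) + 2 * Z' ρ * F' ρ := by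
  have hZF : ∀ᶠ x in 𝓝 ρ, HasDerivAt (Z * F) (Z' x * F x + Z x * F' x) x :=
    (hZ.and hF).mono fun x hx => hx.1.mul hx.2
  rw [Lmode_eq_of_hasDerivAt hZF
      ((hZ'.mul hF.self_of_nhds.differentiableAt.hasDerivAt).add (hZ.self_of_nhds.mul hF')),
    Lmode_eq_of_hasDerivAt hZ hZ', hF.self_of_nhds.deriv, Pi.mul_apply]
  ring

lemma Lmode_neg_one_Zneg1 {x : ℝ} (hx : x ≠ 0) : Lmode (-1) Zneg1 x = 0 := by
  have hden : 1 + x ^ 2 ≠ 0 := by positivity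
  rw [Lmode_eq_of_hasDerivAt (Eventually.of_forall hasDerivAt_Zneg1) (hasDerivAt_Zneg1_deriv x),
    Real.cos_two_mul, cos_wfun, Zneg1]
  field_simp
  push_cast
  ring

lemma gfun_nonneg (a : ℝ) {s : ℝ} (hs : -1 ≤ s) : 0 ≤ gfun a s :=
  mul_nonneg zero_le_two (Real.rpow_nonneg (by linarith) _)

lemma gfun_le_two {a s : ℝ} (ha : 0 ≤ a) (hs : 0 ≤ s) : gfun a s ≤ 2 := by
  have := Real.rpow_le_one_of_one_le_of_nonpos (by linarith : (1 : ℝ) ≤ 1 + s) (neg_nonpos.2 ha)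
  rw [gfun]
  linarith

lemma gfun_le_two_mul_rpow {a s : ℝ} (ha : 0 ≤ a) (hs : 0 < s) : gfun a s ≤ 2 * s ^ (-a) := by
  have := Real.rpow_le_rpow_of_nonpos hs (by linarith : s ≤ 1 + s) (neg_nonpos.2 ha)
  rw [gfun]
  linarith

lemma continuousAt_gfun (a : ℝ) {s : ℝ} (hs : -1 < s) : ContinuousAt (gfun a) s :=
  continuousAt_const.mul <|
    (Real.continuousAt_rpow_const _ _ (Or.inl (by linarith))).comp (by fun_prop)

def sourceMoment (a r : ℝ) : ℝ := ∫ s in (0 : ℝ)..r, gfun a s * Zneg1 s * s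

def outerIntegrand (a r : ℝ) : ℝ := (1 / (r * Zneg1 r ^ 2)) * sourceMoment a r

def outerIntegral (a R ρ : ℝ) : ℝ := ∫ r in ρ..(4 * R), outerIntegrand a r

lemma phiNeg1_eq_mul (a R : ℝ) : phiNeg1 a R = Zneg1 * outerIntegral a R := rfl

lemma continuousOn_sourceMoment_integrand (a : ℝ) :
    ContinuousOn (fun s => gfun a s * Zneg1 s * s) (Ioi (-1)) := fun _ hs =>
  (((continuousAt_gfun a hs).mul continuous_Zneg1.continuousAt).mul
    continuousAt_id).continuousWithinAt

lemma intervalIntegrable_sourceMoment_integrand (a : ℝ) {r : ℝ} (hr : -1 < r) :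
    IntervalIntegrable (fun s => gfun a s * Zneg1 s * s) volume 0 r :=
  ((continuousOn_sourceMoment_integrand a).mono fun _ hx =>
    lt_of_lt_of_le (lt_min (by norm_num) hr) hx.1).intervalIntegrable

lemma hasDerivAt_sourceMoment (a : ℝ) {r : ℝ} (hr : -1 < r) :
    HasDerivAt (sourceMoment a) (gfun a r * Zneg1 r * r) r :=
  intervalIntegral.integral_hasDerivAt_right (intervalIntegrable_sourceMoment_integrand a hr)
    ((continuousOn_sourceMoment_integrand a).stronglyMeasurableAtFilter isOpen_Ioi r hr)
    ((continuousOn_sourceMoment_integrand a).continuousAt (isOpen_Ioi.mem_nhds hr))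

lemma continuousOn_outerIntegrand (a : ℝ) : ContinuousOn (outerIntegrand a) (Ioi 0) :=
  fun r (hr : 0 < r) =>
    ((continuousAt_const.div (continuousAt_id.mul (continuous_Zneg1.continuousAt.pow 2))
      (mul_pos hr (pow_pos (Zneg1_pos hr.ne') 2)).ne').mul
      (hasDerivAt_sourceMoment a (by linarith)).continuousAt).continuousWithinAt

-- Differentiating `r Z₋₁(r)² h(r) = G(r)`.
lemma hasDerivAt_outerIntegrand (a : ℝ) {r : ℝ} (hr : 0 < r) :
    HasDerivAt (outerIntegrand a)
      ((gfun a r - outerIntegrand a r * (Zneg1 r / r + 2 * (4 * r / (1 + r ^ 2) ^ 2)))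
        / Zneg1 r) r := by
  have hZ := (Zneg1_pos hr.ne').ne'
  have hden : HasDerivAt (fun r => r * Zneg1 r ^ 2)
      (1 * Zneg1 r ^ 2 + r * (2 * Zneg1 r ^ 1 * (4 * r / (1 + r ^ 2) ^ 2))) r :=
    (hasDerivAt_id r).mul ((hasDerivAt_Zneg1 r).pow 2)
  refine (((hasDerivAt_const r (1 : ℝ)).div hden (by positivity)).mul
    (hasDerivAt_sourceMoment a (by linarith))).congr_deriv ?_
  simp only [outerIntegrand, Pi.div_apply]
  field_simp
  ring

lemma hasDerivAt_outerIntegral (a : ℝ) {R x : ℝ} (hR : 0 < R) (hx : 0 < x) :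
    HasDerivAt (outerIntegral a R) (-outerIntegrand a x) x := by
  have hsub : uIcc x (4 * R) ⊆ Ioi 0 := fun y hy =>
    lt_of_lt_of_le (lt_min hx (by linarith)) hy.1
  exact intervalIntegral.integral_hasDerivAt_left
    (((continuousOn_outerIntegrand a).mono hsub).intervalIntegrable)
    ((continuousOn_outerIntegrand a).stronglyMeasurableAtFilter isOpen_Ioi x hx)
    ((continuousOn_outerIntegrand a).continuousAt (isOpen_Ioi.mem_nhds hx))

theorem Lmode_phiNeg1_add_gfun (a : ℝ) {R ρ : ℝ} (hR : 0 < R) (hρ : 0 < ρ) :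
    Lmode (-1) (phiNeg1 a R) ρ + gfun a ρ = 0 := by
  have hZ := (Zneg1_pos hρ.ne').ne'
  rw [phiNeg1_eq_mul, Lmode_mul_of_hasDerivAt (Eventually.of_forall hasDerivAt_Zneg1)
    (hasDerivAt_Zneg1_deriv ρ)
    ((lt_mem_nhds hρ).mono fun x hx => hasDerivAt_outerIntegral a hR hx)
    (hasDerivAt_outerIntegrand a hρ).neg, Lmode_neg_one_Zneg1 hρ.ne']
  field_simp
  ring

lemma sourceMoment_nonneg (a : ℝ) {r : ℝ} (hr : 0 ≤ r) : 0 ≤ sourceMoment a r :=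
  intervalIntegral.integral_nonneg hr fun s hs =>
    mul_nonneg (mul_nonneg (gfun_nonneg a (by linarith [hs.1])) (Zneg1_nonneg s)) hs.1

lemma sourceMoment_le_pow_four {a r : ℝ} (ha : 0 ≤ a) (hr : 0 ≤ r) :
    sourceMoment a r ≤ r ^ 4 :=
  calc sourceMoment a r ≤ ∫ s in (0 : ℝ)..r, 4 * s ^ 3 := by
        refine intervalIntegral.integral_mono_on hr
          (intervalIntegrable_sourceMoment_integrand a (by linarith))
          ((by fun_prop : Continuous fun s : ℝ => 4 * s ^ 3).intervalIntegrable _ _)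
          fun s hs => ?_
        have := mul_le_mul (gfun_le_two ha hs.1) (Zneg1_le_two_mul_sq s) (Zneg1_nonneg s)
          zero_le_two
        nlinarith [hs.1]
    _ = r ^ 4 := by
        rw [intervalIntegral.integral_const_mul, integral_pow]
        ring

lemma sourceMoment_le_rpow {a r : ℝ} (ha0 : 0 ≤ a) (ha2 : a < 2) (hr : 0 ≤ r) :
    sourceMoment a r ≤ 4 / (2 - a) * r ^ (2 - a) :=
  calc sourceMoment a r ≤ ∫ s in (0 : ℝ)..r, 4 * s ^ (1 - a) := by
        refine intervalIntegral.integral_mono_on hr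
          (intervalIntegrable_sourceMoment_integrand a (by linarith))
          ((intervalIntegral.intervalIntegrable_rpow' (by linarith)).const_mul 4)
          fun s hs => ?_
        rcases hs.1.eq_or_lt with rfl | hs0
        · simp only [mul_zero]
          positivity
        have hZs : Zneg1 s * s ≤ 2 * s := by nlinarith [Zneg1_le_two s]
        calc gfun a s * Zneg1 s * s ≤ 2 * s ^ (-a) * (2 * s) := by
              rw [mul_assoc]
              exact mul_le_mul (gfun_le_two_mul_rpow ha0 hs0) hZs
                (mul_nonneg (Zneg1_nonneg s) hs0.le) (by positivity)
          _ = 4 * s ^ (1 - a) := by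
              rw [sub_eq_neg_add, Real.rpow_add_one hs0.ne']
              ring
    _ = 4 / (2 - a) * r ^ (2 - a) := by
        rw [intervalIntegral.integral_const_mul, integral_rpow (Or.inl (by linarith)),
          show 1 - a + 1 = 2 - a by ring, Real.zero_rpow (by linarith)]
        ring

lemma one_div_mul_Zneg1_sq {r : ℝ} (hr : r ≠ 0) :
    1 / (r * Zneg1 r ^ 2) = (1 + r ^ 2) ^ 2 / (4 * r ^ 5) := by
  have : 1 + r ^ 2 ≠ 0 := by positivity
  rw [Zneg1]
  field_simp
  ring

lemma outerIntegrand_nonneg (a : ℝ) {r : ℝ} (hr : 0 < r) : 0 ≤ outerIntegrand a r :=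
  mul_nonneg (by have := Zneg1_pos hr.ne'; positivity) (sourceMoment_nonneg a hr.le)

lemma outerIntegrand_le_rpow_neg_three {a r : ℝ} (ha : 0 ≤ a) (hr : 0 < r) (hr1 : r ≤ 1) :
    outerIntegrand a r ≤ r ^ (-3 : ℝ) := by
  have hsq : (1 + r ^ 2) ^ 2 ≤ 4 := by nlinarith [pow_le_one₀ hr.le hr1 (n := 2)]
  rw [outerIntegrand, one_div_mul_Zneg1_sq hr.ne', Real.rpow_neg hr.le,
    show (3 : ℝ) = (3 : ℕ) by norm_num, Real.rpow_natCast, div_mul_eq_mul_div,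
    div_le_iff₀ (by positivity)]
  calc (1 + r ^ 2) ^ 2 * sourceMoment a r ≤ 4 * r ^ 4 :=
        mul_le_mul hsq (sourceMoment_le_pow_four ha hr.le) (sourceMoment_nonneg a hr.le)
          (by norm_num)
    _ ≤ 4 * r ^ 2 := by nlinarith [pow_le_one₀ hr.le hr1 (n := 2), sq_nonneg r]
    _ = (r ^ 3)⁻¹ * (4 * r ^ 5) := by field_simp

lemma outerIntegrand_le_rpow {a r : ℝ} (ha0 : 0 ≤ a) (ha2 : a < 2) (hr1 : 1 ≤ r) :
    outerIntegrand a r ≤ 4 / (2 - a) * r ^ (1 - a) := by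
  have hr : 0 < r := by linarith
  have hfactor : (1 + r ^ 2) ^ 2 / (4 * r ^ 5) ≤ 1 / r := by
    rw [div_le_div_iff₀ (by positivity) hr]
    nlinarith [pow_le_pow_right₀ hr1 (show 2 ≤ 4 by norm_num), pow_pos hr 4]
  calc outerIntegrand a r ≤ 1 / r * (4 / (2 - a) * r ^ (2 - a)) := by
        rw [outerIntegrand, one_div_mul_Zneg1_sq hr.ne']
        exact mul_le_mul hfactor (sourceMoment_le_rpow ha0 ha2 hr.le)
          (sourceMoment_nonneg a hr.le) (by positivity)
    _ = 4 / (2 - a) * r ^ (1 - a) := by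
        rw [show 2 - a = 1 - a + 1 by ring, Real.rpow_add_one hr.ne']
        field_simp

lemma outerIntegrand_le {a r : ℝ} (ha0 : 0 ≤ a) (ha2 : a < 2) (hr : 0 < r) :
    outerIntegrand a r ≤ r ^ (-3 : ℝ) + 4 / (2 - a) * r ^ (1 - a) := by
  have h3 : 0 ≤ r ^ (-3 : ℝ) := Real.rpow_nonneg hr.le _
  have h1a : 0 ≤ 4 / (2 - a) * r ^ (1 - a) :=
    mul_nonneg (div_nonneg (by norm_num) (by linarith)) (Real.rpow_nonneg hr.le _)
  rcases le_total r 1 with hr1 | hr1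
  · linarith [outerIntegrand_le_rpow_neg_three ha0 hr hr1]
  · linarith [outerIntegrand_le_rpow ha0 ha2 hr1]

lemma outerIntegral_nonneg (a : ℝ) {R ρ : ℝ} (hρ : 0 < ρ) (hle : ρ ≤ 4 * R) :
    0 ≤ outerIntegral a R ρ :=
  intervalIntegral.integral_nonneg hle fun _ hr => outerIntegrand_nonneg a (hρ.trans_le hr.1)

lemma outerIntegral_le {a R ρ : ℝ} (ha0 : 0 ≤ a) (ha2 : a < 2) (hρ : 0 < ρ)
    (hle : ρ ≤ 4 * R) :
    outerIntegral a R ρ ≤ ρ ^ (-2 : ℝ) / 2 + 4 / (2 - a) ^ 2 * (4 * R) ^ (2 - a) := by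
  have hpos : uIcc ρ (4 * R) ⊆ Ioi 0 := fun _ hr => lt_of_lt_of_le hρ (by
    rw [uIcc_of_le hle] at hr; exact hr.1)
  have h0 : (0 : ℝ) ∉ uIcc ρ (4 * R) := fun h => lt_irrefl (0 : ℝ) (hpos h)
  have hint3 : IntervalIntegrable (fun r : ℝ => r ^ (-3 : ℝ)) volume ρ (4 * R) :=
    intervalIntegral.intervalIntegrable_rpow (Or.inr h0)
  have hint1a : IntervalIntegrable (fun r : ℝ => 4 / (2 - a) * r ^ (1 - a)) volume ρ (4 * R) :=
    (intervalIntegral.intervalIntegrable_rpow' (by linarith)).const_mul _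
  have h4R := Real.rpow_nonneg (hρ.le.trans hle) (-2 : ℝ)
  have hρa := Real.rpow_nonneg hρ.le (2 - a)
  have h2a : 0 < 2 - a := by linarith
  calc outerIntegral a R ρ
      ≤ ∫ r in ρ..(4 * R), (r ^ (-3 : ℝ) + 4 / (2 - a) * r ^ (1 - a)) :=
        intervalIntegral.integral_mono_on hle
          (((continuousOn_outerIntegrand a).mono hpos).intervalIntegrable) (hint3.add hint1a)
          fun r hr => outerIntegrand_le ha0 ha2 (hρ.trans_le hr.1)
    _ = (ρ ^ (-2 : ℝ) - (4 * R) ^ (-2 : ℝ)) / 2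
          + 4 / (2 - a) ^ 2 * ((4 * R) ^ (2 - a) - ρ ^ (2 - a)) := by
        rw [intervalIntegral.integral_add hint3 hint1a, intervalIntegral.integral_const_mul,
          integral_rpow (Or.inr ⟨by norm_num, h0⟩), integral_rpow (Or.inl (by linarith)),
          show (-3 : ℝ) + 1 = -2 by norm_num, show 1 - a + 1 = 2 - a by ring]
        field_simp
        ring
    _ ≤ ρ ^ (-2 : ℝ) / 2 + 4 / (2 - a) ^ 2 * (4 * R) ^ (2 - a) := by
        gcongr <;> linarith

lemma phiNeg1_nonneg (a : ℝ) {R ρ : ℝ} (hρ : 0 < ρ) (hle : ρ ≤ 4 * R) :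
    0 ≤ phiNeg1 a R ρ :=
  mul_nonneg (Zneg1_nonneg ρ) (outerIntegral_nonneg a hρ hle)

lemma phiNeg1_le {a R ρ : ℝ} (ha0 : 0 ≤ a) (ha2 : a < 2) (hR : 1 ≤ R) (hρ : 0 < ρ)
    (hle : ρ ≤ 4 * R) : phiNeg1 a R ρ ≤ (1 + 128 / (2 - a) ^ 2) * R ^ (2 - a) := by
  have h2a : 0 < 2 - a := by linarith
  have hRpow : 1 ≤ R ^ (2 - a) := Real.one_le_rpow hR h2a.le
  have hZρ : Zneg1 ρ * (ρ ^ (-2 : ℝ) / 2) ≤ 1 := by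
    have : 1 + ρ ^ 2 ≠ 0 := by positivity
    rw [Real.rpow_neg hρ.le, Real.rpow_two, Zneg1, div_mul_eq_mul_div, div_le_one (by positivity)]
    field_simp
    nlinarith [sq_nonneg ρ]
  have h4R : (4 * R) ^ (2 - a) ≤ 16 * R ^ (2 - a) := by
    rw [Real.mul_rpow (by norm_num) (by linarith)]
    gcongr
    calc (4 : ℝ) ^ (2 - a) ≤ 4 ^ (2 : ℝ) :=
          Real.rpow_le_rpow_of_exponent_le (by norm_num) (by linarith)
      _ = 16 := by norm_num
  calc phiNeg1 a R ρ
      ≤ Zneg1 ρ * (ρ ^ (-2 : ℝ) / 2 + 4 / (2 - a) ^ 2 * (4 * R) ^ (2 - a)) :=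
        mul_le_mul_of_nonneg_left (outerIntegral_le ha0 ha2 hρ hle) (Zneg1_nonneg ρ)
    _ ≤ 1 + 2 * (4 / (2 - a) ^ 2 * (16 * R ^ (2 - a))) := by
        rw [mul_add]
        gcongr
        · exact Zneg1_le_two ρ
    _ = 1 + 128 / (2 - a) ^ 2 * R ^ (2 - a) := by ring
    _ ≤ (1 + 128 / (2 - a) ^ 2) * R ^ (2 - a) := by
        rw [add_mul, one_mul]
        linarith

/-- The variation-of-parameters solution at mode `-1` solves `ℒ₋₁[φ] + g = 0` on `(0, 4R)`,
vanishes at `4R`, and satisfies `|φ(ρ)| ≤ C R^{2-a}` with `C` depending only on `a`. -/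
theorem mode_neg_one_barrier (a : ℝ) (ha1 : 1 < a) (ha2 : a < 2) :
    ∃ C > 0, ∀ R : ℝ, 2 ≤ R →
      (∀ ρ : ℝ, 0 < ρ → ρ < 4 * R → Lmode (-1) (phiNeg1 a R) ρ + gfun a ρ = 0) ∧
      phiNeg1 a R (4 * R) = 0 ∧
      (∀ ρ : ℝ, 0 < ρ → ρ ≤ 4 * R → |phiNeg1 a R ρ| ≤ C * R ^ (2 - a)) := by
  refine ⟨1 + 128 / (2 - a) ^ 2, by positivity, fun R hR => ⟨?_, ?_, fun ρ hρ hle => ?_⟩⟩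
  · exact fun ρ hρ _ => Lmode_phiNeg1_add_gfun a (by linarith) hρ
  · simp [phiNeg1]
  · rw [abs_of_nonneg (phiNeg1_nonneg a hρ hle)]
    exact phiNeg1_le (by linarith) ha2 (by linarith) hρ hle
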